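/- Let n ≥ 1 and let P be an n×n real row-stochastic matrix (all entries nonnegative, each row summing to 1) that is irreducible (for every pair of indices i, j there exists m ≥ 1 with (P^m)_{i,j} > 0) and aperiodic (for every index i, the gcd of { m ≥ 1 : (P^m)_{i,i} > 0 } equals 1). Then there exists a unique probability vector π ∈ ℝ^n (entries nonnegative, summing to 1) satisfying πᵀ P = πᵀ; moreover every entry of π is strictly positive, and for every starting index x and every index i, (P^k)_{x,i} converges to π_i as k → ∞. -/

import Mathlib

/-!
Aperiodicity makes the return times to each state a submonoid of `ℕ` with gcd `1`, so it contains
all large integers; together with irreducibility this makes some power `P ^ N` entrywise positive,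
say with all entries at least `δ > 0`. Each column of `P ^ k` then has a minimum that increases
and a maximum that decreases in `k`, and passing from `P ^ k` to `P ^ (k + N)` shrinks their gap
by a factor `1 - δ`. Hence every column of `P ^ k` converges to a constant vector `π j`, and `π`
is stationary, positive and the only stationary distribution.
-/

open Finset Filter Topology

lemma AddSubmonoid.eventually_mem_of_gcd_eq_one (S : AddSubmonoid ℕ)
    (hS : ∀ d : ℕ, (∀ m ∈ S, d ∣ m) → d = 1) : ∀ᶠ m in atTop, m ∈ S := by
  have hgcd : Nat.setGcd S = 1 := hS _ fun _ => Nat.setGcd_dvd_of_mem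
  obtain ⟨N, hN⟩ := Nat.exists_mem_closure_of_ge (S : Set ℕ)
  refine eventually_atTop.2 ⟨N, fun m hm => ?_⟩
  simpa using hN m hm (hgcd ▸ one_dvd m)

lemma exists_tendsto_of_monotone_of_antitone_of_sub_le_mul {lo hi : ℕ → ℝ} {c : ℝ} {N : ℕ}
    (hlo : Monotone lo) (hhi : Antitone hi) (hle : ∀ k, lo k ≤ hi k) (hc : c < 1)
    (hgap : ∀ k, hi (k + N) - lo (k + N) ≤ c * (hi k - lo k)) :
    ∃ L, Tendsto lo atTop (𝓝 L) ∧ Tendsto hi atTop (𝓝 L) := by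
  have hlo_lim := tendsto_atTop_ciSup hlo
    ⟨hi 0, Set.forall_mem_range.2 fun k => (hle k).trans (hhi k.zero_le)⟩
  have hhi_lim := tendsto_atTop_ciInf hhi
    ⟨lo 0, Set.forall_mem_range.2 fun k => (hlo k.zero_le).trans (hle k)⟩
  have hab : ⨆ k, lo k ≤ ⨅ k, hi k := le_of_tendsto_of_tendsto' hlo_lim hhi_lim hle
  have hgap_lim := hhi_lim.sub hlo_lim
  have hba : (⨅ k, hi k) - ⨆ k, lo k ≤ c * ((⨅ k, hi k) - ⨆ k, lo k) :=
    le_of_tendsto_of_tendsto' (hgap_lim.comp (tendsto_add_atTop_nat N)) (hgap_lim.const_mul c) hgap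
  have heq : ⨅ k, hi k = ⨆ k, lo k := by nlinarith
  exact ⟨_, hlo_lim, heq ▸ hhi_lim⟩

namespace Matrix

variable {ι : Type*} [Fintype ι] [DecidableEq ι]

section Primitive

variable {A : Matrix ι ι ℝ}

lemma pow_apply_mul_pow_apply_le (hA : ∀ i j, 0 ≤ A i j) (a b : ℕ) (x z y : ι) :
    (A ^ a) x z * (A ^ b) z y ≤ (A ^ (a + b)) x y := by
  rw [pow_add, mul_apply]
  exact single_le_sum (fun c _ => mul_nonneg (pow_apply_nonneg hA a x c)
    (pow_apply_nonneg hA b c y)) (mem_univ z)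

lemma eventually_pow_apply_self_pos (hA : ∀ i j, 0 ≤ A i j) {i : ι}
    (haper : ∀ d : ℕ, (∀ m, 1 ≤ m → 0 < (A ^ m) i i → d ∣ m) → d = 1) :
    ∀ᶠ m in atTop, 0 < (A ^ m) i i := by
  let returnTimes : AddSubmonoid ℕ :=
    { carrier := {m | 0 < (A ^ m) i i}
      zero_mem' := by simp
      add_mem' := fun {a b} ha hb =>
        (mul_pos ha hb).trans_le (pow_apply_mul_pow_apply_le hA a b i i i) }
  exact returnTimes.eventually_mem_of_gcd_eq_one fun d hd => haper d fun m _ hm => hd m hm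

theorem isPrimitive_of_aperiodic (hA : ∀ i j, 0 ≤ A i j)
    (hirr : ∀ i j, ∃ m, 0 < (A ^ m) i j)
    (haper : ∀ i, ∀ d : ℕ, (∀ m, 1 ≤ m → 0 < (A ^ m) i i → d ∣ m) → d = 1) :
    A.IsPrimitive := by
  have hpos : ∀ x y, ∀ᶠ m in atTop, 0 < (A ^ m) x y := by
    intro x y
    obtain ⟨t, ht⟩ := hirr x y
    filter_upwards [(tendsto_sub_atTop_nat t).eventually
      (eventually_pow_apply_self_pos hA (haper x)), eventually_ge_atTop t] with m hm htm
    have hle := pow_apply_mul_pow_apply_le hA (m - t) t x x y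
    rw [Nat.sub_add_cancel htm] at hle
    exact (mul_pos hm ht).trans_le hle
  obtain ⟨N, hN, hNpos⟩ :=
    ((eventually_gt_atTop 0).and (eventually_all.2 fun x => eventually_all.2 (hpos x))).exists
  exact ⟨hA, N, hN, hNpos⟩

end Primitive

section Stochastic

variable [Nonempty ι] {Q : Matrix ι ι ℝ}

lemma inf'_le_mulVec_apply (hQ : Q ∈ rowStochastic ℝ ι) (v : ι → ℝ) (x : ι) :
    univ.inf' univ_nonempty v ≤ (Q *ᵥ v) x :=
  calc univ.inf' univ_nonempty v = ∑ y, Q x y * univ.inf' univ_nonempty v := by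
        rw [← sum_mul, sum_row_of_mem_rowStochastic hQ, one_mul]
    _ ≤ ∑ y, Q x y * v y := sum_le_sum fun y _ =>
        mul_le_mul_of_nonneg_left (inf'_le v (mem_univ y)) (nonneg_of_mem_rowStochastic hQ)

lemma mulVec_apply_le_sup'_sub (hQ : Q ∈ rowStochastic ℝ ι) {x : ι} {δ : ℝ}
    (hδ : ∀ y, δ ≤ Q x y) (v : ι → ℝ) :
    (Q *ᵥ v) x ≤ univ.sup' univ_nonempty v
      - δ * (univ.sup' univ_nonempty v - univ.inf' univ_nonempty v) := by
  set M := univ.sup' univ_nonempty v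
  obtain ⟨y₀, -, hy₀⟩ := exists_mem_eq_inf' univ_nonempty v
  have hdeficit : δ * (M - univ.inf' univ_nonempty v) ≤ ∑ y, Q x y * (M - v y) :=
    calc δ * (M - univ.inf' univ_nonempty v) ≤ Q x y₀ * (M - v y₀) := by
          rw [← hy₀]
          exact mul_le_mul_of_nonneg_right (hδ y₀)
            (sub_nonneg.2 ((inf'_le v (mem_univ y₀)).trans (le_sup' v (mem_univ y₀))))
      _ ≤ ∑ y, Q x y * (M - v y) :=
          single_le_sum (fun y _ => mul_nonneg (nonneg_of_mem_rowStochastic hQ (i := x) (j := y))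
            (sub_nonneg.2 (le_sup' v (mem_univ y)))) (mem_univ y₀)
  have hsplit : (Q *ᵥ v) x = M - ∑ y, Q x y * (M - v y) := by
    simp only [mul_sub, sum_sub_distrib, ← sum_mul, sum_row_of_mem_rowStochastic hQ, one_mul,
      sub_sub_cancel]
    rfl
  linarith

lemma mulVec_apply_le_sup' (hQ : Q ∈ rowStochastic ℝ ι) (v : ι → ℝ) (x : ι) :
    (Q *ᵥ v) x ≤ univ.sup' univ_nonempty v := by
  simpa using mulVec_apply_le_sup'_sub hQ (fun _ => nonneg_of_mem_rowStochastic hQ) v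

end Stochastic

lemma pow_add_apply_eq_mulVec (P : Matrix ι ι ℝ) (k m : ℕ) (x j : ι) :
    (P ^ (k + m)) x j = (P ^ m *ᵥ fun y => (P ^ k) y j) x := by
  rw [add_comm, pow_add]
  rfl

theorem exists_tendsto_pow_apply {P : Matrix ι ι ℝ} (hP : P ∈ rowStochastic ℝ ι)
    (hprim : P.IsPrimitive) :
    ∃ π : ι → ℝ, ∀ x j, Tendsto (fun k => (P ^ k) x j) atTop (𝓝 (π j)) := by
  obtain ⟨-, N, -, hN⟩ := hprim
  have hcol : ∀ j, ∃ L, ∀ x, Tendsto (fun k => (P ^ k) x j) atTop (𝓝 L) := by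
    intro j
    have : Nonempty ι := ⟨j⟩
    set lo : ℕ → ℝ := fun k => univ.inf' univ_nonempty fun x => (P ^ k) x j
    set hi : ℕ → ℝ := fun k => univ.sup' univ_nonempty fun x => (P ^ k) x j
    have hlo_le : ∀ k x, lo k ≤ (P ^ k) x j := fun k x => inf'_le _ (mem_univ x)
    have hle_hi : ∀ k x, (P ^ k) x j ≤ hi k := fun k x =>
      le_sup' (fun x => (P ^ k) x j) (mem_univ x)
    have hlo : Monotone lo := monotone_nat_of_le_succ fun k => le_inf' _ _ fun x _ => by
      rw [pow_add_apply_eq_mulVec]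
      exact inf'_le_mulVec_apply (pow_mem hP 1) _ x
    have hhi : Antitone hi := antitone_nat_of_succ_le fun k => sup'_le _ _ fun x _ => by
      rw [pow_add_apply_eq_mulVec]
      exact mulVec_apply_le_sup' (pow_mem hP 1) _ x
    obtain ⟨p, hp⟩ := Finite.exists_min fun p : ι × ι => (P ^ N) p.1 p.2
    have hgap : ∀ k, hi (k + N) - lo (k + N) ≤ (1 - (P ^ N) p.1 p.2) * (hi k - lo k) := by
      intro k
      have hhi_step : hi (k + N) ≤ hi k - (P ^ N) p.1 p.2 * (hi k - lo k) :=
        sup'_le _ _ fun x _ => by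
          rw [pow_add_apply_eq_mulVec]
          exact mulVec_apply_le_sup'_sub (pow_mem hP N) (fun y => hp (x, y)) _
      have hlo_step : lo k ≤ lo (k + N) := hlo (k.le_add_right N)
      linarith
    obtain ⟨L, hlo_lim, hhi_lim⟩ := exists_tendsto_of_monotone_of_antitone_of_sub_le_mul hlo hhi
      (fun k => (hlo_le k j).trans (hle_hi k j)) (sub_lt_self 1 (hN p.1 p.2)) hgap
    exact ⟨L, fun x => tendsto_of_tendsto_of_tendsto_of_le_of_le hlo_lim hhi_lim (hlo_le · x)
      (hle_hi · x)⟩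
  choose π hπ using hcol
  exact ⟨π, fun x j => hπ j x⟩

lemma vecMul_pow_eq_self {R : Type*} [Semiring R] {A : Matrix ι ι R} {v : ι → R}
    (h : v ᵥ* A = v) (k : ℕ) : v ᵥ* A ^ k = v := by
  induction k with
  | zero => simp
  | succ k ih => rw [pow_succ, ← vecMul_vecMul, ih, h]

section Stationary

variable {P : Matrix ι ι ℝ} {π : ι → ℝ}

def IsStationaryDistribution (P : Matrix ι ι ℝ) (π : ι → ℝ) : Prop :=
  (∀ i, 0 ≤ π i) ∧ ∑ i, π i = 1 ∧ π ᵥ* P = π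

theorem isStationaryDistribution_of_tendsto_pow_apply [Nonempty ι]
    (hP : P ∈ rowStochastic ℝ ι)
    (hlim : ∀ x j, Tendsto (fun k => (P ^ k) x j) atTop (𝓝 (π j))) :
    IsStationaryDistribution P π := by
  let x : ι := Classical.arbitrary ι
  refine ⟨fun j => ge_of_tendsto' (hlim x j) fun k => nonneg_of_mem_rowStochastic (pow_mem hP k),
    ?_, ?_⟩
  · refine tendsto_nhds_unique (tendsto_finsetSum _ fun j _ => hlim x j) ?_
    simp only [sum_row_of_mem_rowStochastic (pow_mem hP _)]
    exact tendsto_const_nhds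
  · ext j
    refine tendsto_nhds_unique ?_ ((hlim x j).comp (tendsto_add_atTop_nat 1))
    have hstep : ∀ k, (P ^ (k + 1)) x j = ∑ i, (P ^ k) x i * P i j := fun k => by
      rw [pow_succ, mul_apply]
    simpa only [Function.comp_def, hstep, vecMul, dotProduct] using
      tendsto_finsetSum _ fun i _ => (hlim x i).mul_const (P i j)

theorem IsStationaryDistribution.eq_of_tendsto_pow_apply {π' : ι → ℝ}
    (hπ' : IsStationaryDistribution P π')
    (hlim : ∀ x j, Tendsto (fun k => (P ^ k) x j) atTop (𝓝 (π j))) : π' = π := by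
  obtain ⟨-, hsum, hfix⟩ := hπ'
  ext j
  have hconst : Tendsto (fun k => (π' ᵥ* P ^ k) j) atTop (𝓝 (∑ x, π' x * π j)) :=
    tendsto_finsetSum _ fun x _ => (hlim x j).const_mul (π' x)
  rw [← sum_mul, hsum, one_mul] at hconst
  simp only [vecMul_pow_eq_self hfix] at hconst
  exact tendsto_nhds_unique tendsto_const_nhds hconst

theorem IsStationaryDistribution.pos (hπ : IsStationaryDistribution P π) (hprim : P.IsPrimitive)
    (j : ι) : 0 < π j := by
  obtain ⟨hnonneg, hsum, hfix⟩ := hπ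
  obtain ⟨-, N, -, hN⟩ := hprim
  obtain ⟨x, -, hx⟩ : ∃ x ∈ univ, (0 : ι → ℝ) x < π x :=
    exists_lt_of_sum_lt (by simp [hsum])
  rw [← vecMul_pow_eq_self hfix N]
  exact sum_pos' (fun y _ => mul_nonneg (hnonneg y) (hN y j).le)
    ⟨x, mem_univ x, mul_pos hx (hN x j)⟩

end Stationary

end Matrix

/-- An irreducible, aperiodic row-stochastic matrix has a unique stationary
probability vector `π`; moreover `π` is strictly positive and `(P^k) x i → π i`. -/
theorem stationary_distribution_of_irreducible_aperiodic
    (n : ℕ) (hn : 1 ≤ n) (P : Matrix (Fin n) (Fin n) ℝ)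
    (hnonneg : ∀ i j, 0 ≤ P i j)
    (hrow : ∀ i, ∑ j, P i j = 1)
    (hirr : ∀ i j, ∃ m, 1 ≤ m ∧ 0 < (P ^ m) i j)
    (haper : ∀ i, ∀ d : ℕ, (∀ m, 1 ≤ m → 0 < (P ^ m) i i → d ∣ m) → d = 1) :
    ∃ π : Fin n → ℝ,
      ((∀ i, 0 ≤ π i) ∧ (∑ i, π i) = 1 ∧ Matrix.vecMul π P = π) ∧
      (∀ π' : Fin n → ℝ,
        ((∀ i, 0 ≤ π' i) ∧ (∑ i, π' i) = 1 ∧ Matrix.vecMul π' P = π') → π' = π) ∧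
      (∀ i, 0 < π i) ∧
      (∀ x i, Filter.Tendsto (fun k : ℕ => (P ^ k) x i) Filter.atTop (nhds (π i))) := by
  have : Nonempty (Fin n) := ⟨⟨0, hn⟩⟩
  have hP : P ∈ Matrix.rowStochastic ℝ (Fin n) :=
    Matrix.mem_rowStochastic_iff_sum.2 ⟨hnonneg, hrow⟩
  have hprim : P.IsPrimitive :=
    Matrix.isPrimitive_of_aperiodic hnonneg (fun i j => (hirr i j).imp fun _ => And.right) haper
  obtain ⟨π, hlim⟩ := Matrix.exists_tendsto_pow_apply hP hprim
  have hπ : P.IsStationaryDistribution π :=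
    Matrix.isStationaryDistribution_of_tendsto_pow_apply hP hlim
  refine ⟨π, hπ, fun π' hπ' => ?_, hπ.pos hprim, hlim⟩
  exact Matrix.IsStationaryDistribution.eq_of_tendsto_pow_apply hπ' hlim
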